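/- arXiv:2502.13703 — 2 statements merged into one kernel-verified Lean document; each statement's English description precedes it below -/
import Mathlib

section
/- For every positive integer k, an enemy-oriented hedonic game without neutrals admits a core stable partition all of whose coalitions have at most k agents if and only if the friendship graph G^f contains no clique with k + 1 vertices. -/
open scoped Classical

variable {A : Type*}

/-- Number of friends of agent `i` in coalition `S` (friendship graph `G`). -/
noncomputable def friendsIn (G : SimpleGraph A) (i : A) (S : Finset A) : ℕ :=
  (S.filter fun j => G.Adj i j).card

/-- Number of enemies of agent `i` in coalition `S`; without neutrals, an enemy
is any distinct non-adjacent agent. -/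
noncomputable def enemiesIn (G : SimpleGraph A) (i : A) (S : Finset A) : ℕ :=
  (S.filter fun j => j ≠ i ∧ ¬ G.Adj i j).card

/-- Agent `i` prefers coalition `S1` over `S2`. -/
def Prefers (G : SimpleGraph A) (i : A) (S1 S2 : Finset A) : Prop :=
  enemiesIn G i S1 < enemiesIn G i S2 ∨
    (enemiesIn G i S1 = enemiesIn G i S2 ∧ friendsIn G i S2 < friendsIn G i S1)

/-- Agent `i` weakly prefers coalition `S1` over `S2`. -/
def WeaklyPrefers (G : SimpleGraph A) (i : A) (S1 S2 : Finset A) : Prop :=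
  ¬ Prefers G i S2 S1

variable [Fintype A] [DecidableEq A]

/-- Coalition `B` blocks partition `P`. -/
def Blocks (G : SimpleGraph A) (P : Finpartition (Finset.univ : Finset A))
    (B : Finset A) : Prop :=
  B.Nonempty ∧ ∀ i ∈ B, ∀ C ∈ P.parts, i ∈ C → Prefers G i B C

/-- Coalition `B` weakly blocks partition `P`. -/
def WeaklyBlocks (G : SimpleGraph A) (P : Finpartition (Finset.univ : Finset A))
    (B : Finset A) : Prop :=
  B.Nonempty ∧ (∀ i ∈ B, ∀ C ∈ P.parts, i ∈ C → WeaklyPrefers G i B C) ∧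
    ∃ i ∈ B, ∀ C ∈ P.parts, i ∈ C → Prefers G i B C

/-- Partition `P` is core stable: no coalition blocks it. -/
def CoreStable (G : SimpleGraph A) (P : Finpartition (Finset.univ : Finset A)) : Prop :=
  ∀ B : Finset A, ¬ Blocks G P B

/-- Partition `P` is strictly core stable: no coalition weakly blocks it. -/
def StrictlyCoreStable (G : SimpleGraph A)
    (P : Finpartition (Finset.univ : Finset A)) : Prop :=
  ∀ B : Finset A, ¬ WeaklyBlocks G P B

/-! ### Auxiliary lemmas -/

lemma enemiesIn_eq_zero_of_clique {G : SimpleGraph A} {S : Finset A}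
    (hS : G.IsClique (S : Set A)) {i : A} (hi : i ∈ S) : enemiesIn G i S = 0 := by
  rw [enemiesIn, Finset.card_eq_zero, Finset.eq_empty_iff_forall_notMem]
  intro j hj
  simp only [Finset.mem_filter] at hj
  obtain ⟨hjS, hne, hnadj⟩ := hj
  exact hnadj (hS (Finset.mem_coe.2 hi) (Finset.mem_coe.2 hjS) hne.symm)

lemma friendsIn_of_clique {G : SimpleGraph A} {S : Finset A}
    (hS : G.IsClique (S : Set A)) {i : A} (hi : i ∈ S) :
    friendsIn G i S = S.card - 1 := by
  rw [friendsIn]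
  have h : S.filter (fun j => G.Adj i j) = S.erase i := by
    ext j
    simp only [Finset.mem_filter, Finset.mem_erase]
    constructor
    · rintro ⟨hjS, hadj⟩; exact ⟨(G.ne_of_adj hadj).symm, hjS⟩
    · rintro ⟨hne, hjS⟩
      exact ⟨hjS, hS (Finset.mem_coe.2 hi) (Finset.mem_coe.2 hjS) hne.symm⟩
  rw [h, Finset.card_erase_of_mem hi]

lemma friendsIn_le {G : SimpleGraph A} {S : Finset A} {i : A} (hi : i ∈ S) :
    friendsIn G i S ≤ S.card - 1 := by
  rw [friendsIn, ← Finset.card_erase_of_mem hi]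
  apply Finset.card_le_card
  intro j hj
  rw [Finset.mem_filter] at hj
  exact Finset.mem_erase.2 ⟨(G.ne_of_adj hj.2).symm, hj.1⟩

lemma clique_of_enemies_zero {G : SimpleGraph A} {B : Finset A}
    (h : ∀ i ∈ B, enemiesIn G i B = 0) : G.IsClique (B : Set A) := by
  intro i hi j hj hij
  by_contra hadj
  have h0 := h i (Finset.mem_coe.1 hi)
  rw [enemiesIn, Finset.card_eq_zero, Finset.eq_empty_iff_forall_notMem] at h0
  exact h0 j (by simp only [Finset.mem_filter]; exact ⟨Finset.mem_coe.1 hj, hij.symm, hadj⟩)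

lemma card_le_of_cliqueFree {G : SimpleGraph A} {k : ℕ} (hcf : G.CliqueFree (k + 1))
    {C : Finset A} (hC : G.IsClique (C : Set A)) : C.card ≤ k := by
  by_contra h
  push_neg at h
  obtain ⟨D, hDC, hD⟩ := Finset.exists_subset_card_eq h
  exact hcf D ⟨hC.subset (Finset.coe_subset.2 hDC), hD⟩

/-- Potential of a partition: `∑_C (n+1)^|C|`. -/
noncomputable def pot (P : Finpartition (Finset.univ : Finset A)) : ℕ :=
  ∑ C ∈ P.parts, (Fintype.card A + 1) ^ C.card

lemma coreStable_of_max (G : SimpleGraph A) (P : Finpartition (Finset.univ : Finset A))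
    (hclq : ∀ C ∈ P.parts, G.IsClique (C : Set A))
    (hmax : ∀ Q : Finpartition (Finset.univ : Finset A),
      (∀ C ∈ Q.parts, G.IsClique (C : Set A)) → pot Q ≤ pot P) :
    CoreStable G P := by
  set M := Fintype.card A + 1 with hM
  rintro B ⟨hBne, hBpref⟩
  -- every blocking agent has zero enemies in B, and her old part is smaller than B
  have step : ∀ i ∈ B, enemiesIn G i B = 0 ∧
      ∀ C ∈ P.parts, i ∈ C → C.card < B.card := by
    intro i hi
    have hkey : ∀ C ∈ P.parts, i ∈ C → enemiesIn G i B = 0 ∧ C.card < B.card := by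
      intro C hC hiC
      have hpref := hBpref i hi C hC hiC
      have heC : enemiesIn G i C = 0 := enemiesIn_eq_zero_of_clique (hclq C hC) hiC
      rcases hpref with h | ⟨he, hf⟩
      · omega
      · have hfC : friendsIn G i C = C.card - 1 := friendsIn_of_clique (hclq C hC) hiC
        have hfB : friendsIn G i B ≤ B.card - 1 := friendsIn_le hi
        have hCpos : 1 ≤ C.card := Finset.card_pos.2 ⟨i, hiC⟩
        have hBpos : 1 ≤ B.card := Finset.card_pos.2 hBne
        constructor
        · omega
        · omega
    obtain ⟨C, hC, hiC⟩ := P.exists_mem (Finset.mem_univ i)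
    exact ⟨(hkey C hC hiC).1, fun C' hC' hiC' => (hkey C' hC' hiC').2⟩
  have hBclq : G.IsClique (B : Set A) :=
    clique_of_enemies_zero fun i hi => (step i hi).1
  -- build the improved partition
  have hBbot : B ≠ (⊥ : Finset A) := by
    simpa [Finset.bot_eq_empty, ← Finset.nonempty_iff_ne_empty] using hBne
  have hsup : (Finset.univ \ B) ⊔ B = (Finset.univ : Finset A) := by
    rw [Finset.sup_eq_union, Finset.sdiff_union_of_subset (Finset.subset_univ B)]
  set Q := (P.avoid B).extend hBbot Finset.sdiff_disjoint hsup with hQ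
  have hQparts : Q.parts = insert B (P.avoid B).parts := rfl
  have hBnotmem : B ∉ (P.avoid B).parts := by
    intro hmem
    have hle := (P.avoid B).le hmem
    obtain ⟨i, hi⟩ := hBne
    have := hle hi
    rw [Finset.mem_sdiff] at this
    exact this.2 hi
  have hQclq : ∀ C ∈ Q.parts, G.IsClique (C : Set A) := by
    intro C hC
    rw [hQparts, Finset.mem_insert] at hC
    rcases hC with rfl | hC
    · exact hBclq
    · rw [Finpartition.mem_avoid] at hC
      obtain ⟨d, hd, _, rfl⟩ := hC
      exact (hclq d hd).subset (by simp [Finset.coe_sdiff, Set.diff_subset])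
  -- compute and compare potentials
  have hpotQ : pot Q = M ^ B.card + ∑ C ∈ (P.avoid B).parts, M ^ C.card := by
    rw [pot, hQparts, Finset.sum_insert hBnotmem]
  set D := P.parts.filter (fun C => Disjoint C B) with hD
  set E := P.parts.filter (fun C => ¬ Disjoint C B) with hE
  have hsplit : pot P = ∑ C ∈ D, M ^ C.card + ∑ C ∈ E, M ^ C.card := by
    rw [pot, hD, hE, Finset.sum_filter_add_sum_filter_not]
  have hDsub : D ⊆ (P.avoid B).parts := by
    intro C hC
    rw [hD, Finset.mem_filter] at hC
    obtain ⟨hCP, hdisj⟩ := hC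
    have hCne : C.Nonempty := P.nonempty_of_mem_parts hCP
    rw [Finpartition.mem_avoid]
    refine ⟨C, hCP, ?_, ?_⟩
    · intro hle
      obtain ⟨x, hx⟩ := hCne
      exact (Finset.disjoint_left.1 hdisj) hx (hle hx)
    · exact Finset.sdiff_eq_self_of_disjoint hdisj
  have hDle : ∑ C ∈ D, M ^ C.card ≤ ∑ C ∈ (P.avoid B).parts, M ^ C.card :=
    Finset.sum_le_sum_of_subset hDsub
  have hBpos : 1 ≤ B.card := Finset.card_pos.2 hBne
  have hEle : ∑ C ∈ E, M ^ C.card < M ^ B.card := by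
    have hterm : ∀ C ∈ E, M ^ C.card ≤ M ^ (B.card - 1) := by
      intro C hC
      rw [hE, Finset.mem_filter] at hC
      obtain ⟨hCP, hndisj⟩ := hC
      rw [Finset.not_disjoint_iff] at hndisj
      obtain ⟨i, hiC, hiB⟩ := hndisj
      have hlt : C.card < B.card := (step i hiB).2 C hCP hiC
      exact Nat.pow_le_pow_right (by omega) (by omega)
    calc ∑ C ∈ E, M ^ C.card ≤ E.card * M ^ (B.card - 1) := by
          simpa using Finset.sum_le_card_nsmul E _ _ hterm
      _ ≤ Fintype.card A * M ^ (B.card - 1) := by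
          apply Nat.mul_le_mul_right
          calc E.card ≤ P.parts.card := Finset.card_le_card (Finset.filter_subset _ _)
            _ ≤ (Finset.univ : Finset A).card := P.card_parts_le_card
            _ = Fintype.card A := Finset.card_univ
      _ < M * M ^ (B.card - 1) := by
          have h0 : 0 < M ^ (B.card - 1) := Nat.pow_pos (by omega)
          exact (Nat.mul_lt_mul_right h0).2 (by omega)
      _ = M ^ B.card := by
          rw [← pow_succ']
          congr 1
          omega
  have hlt : pot P < pot Q := by
    rw [hsplit, hpotQ]
    omega
  exact absurd (hmax Q hQclq) (by omega)

/-- For every positive integer `k`, there is a core stable partition whose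
coalitions all have at most `k` agents iff the friendship graph has no clique with
`k + 1` vertices. -/
theorem stmt_9 [Nonempty A] (G : SimpleGraph A) (k : ℕ) (hk : 1 ≤ k) :
    (∃ P : Finpartition (Finset.univ : Finset A),
        CoreStable G P ∧ ∀ C ∈ P.parts, C.card ≤ k) ↔ G.CliqueFree (k + 1) := by
  constructor
  · rintro ⟨P, hPst, hPk⟩ t ht
    obtain ⟨htclq, htcard⟩ := ht
    apply hPst t
    have htne : t.Nonempty := Finset.card_pos.1 (by omega)
    refine ⟨htne, ?_⟩
    intro i hi C hC hiC
    have heB : enemiesIn G i t = 0 := enemiesIn_eq_zero_of_clique htclq hi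
    have hfB : friendsIn G i t = t.card - 1 := friendsIn_of_clique htclq hi
    rcases Nat.eq_zero_or_pos (enemiesIn G i C) with h0 | hpos
    · right
      refine ⟨by omega, ?_⟩
      have hfC : friendsIn G i C ≤ C.card - 1 := friendsIn_le hiC
      have hCk : C.card ≤ k := hPk C hC
      have hCpos : 1 ≤ C.card := Finset.card_pos.2 ⟨i, hiC⟩
      omega
    · left; omega
  · intro hcf
    -- pick a clique partition maximizing the potential
    set S : Set ℕ := pot '' {P : Finpartition (Finset.univ : Finset A) |
      ∀ C ∈ P.parts, G.IsClique (C : Set A)} with hS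
    have hne : S.Nonempty := by
      refine ⟨pot (⊥ : Finpartition (Finset.univ : Finset A)), ⊥, ?_, rfl⟩
      intro C hC
      rw [Finpartition.mem_bot_iff] at hC
      obtain ⟨a, _, rfl⟩ := hC
      simp [SimpleGraph.isClique_singleton]
    have hbdd : BddAbove S := by
      refine ⟨Fintype.card A * (Fintype.card A + 1) ^ Fintype.card A, ?_⟩
      rintro x ⟨P, _, rfl⟩
      calc pot P ≤ P.parts.card * (Fintype.card A + 1) ^ Fintype.card A := by
            simpa [pot] using Finset.sum_le_card_nsmul P.parts _ _ (fun C _ =>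
              Nat.pow_le_pow_right (by omega) (Finset.card_le_univ C))
        _ ≤ Fintype.card A * (Fintype.card A + 1) ^ Fintype.card A := by
            apply Nat.mul_le_mul_right
            simpa using P.card_parts_le_card
    obtain ⟨P, hPclq, hPpot⟩ := Nat.sSup_mem hne hbdd
    have hmax : ∀ Q : Finpartition (Finset.univ : Finset A),
        (∀ C ∈ Q.parts, G.IsClique (C : Set A)) → pot Q ≤ pot P := by
      intro Q hQ
      rw [hPpot]
      exact le_csSup hbdd ⟨Q, hQ, rfl⟩
    exact ⟨P, coreStable_of_max G P hPclq hmax,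
      fun C hC => card_le_of_cliqueFree hcf (hPclq C hC)⟩
end

section
/- Let Δ^e be the maximum degree of the enemy graph G^e (the complement of the friendship graph G^f) of an enemy-oriented hedonic game without neutrals. Then every core stable partition consists of at most Δ^e + 1 coalitions. -/
open scoped Classical

variable {A : Type*}

variable [Fintype A] [DecidableEq A]

section Helpers

variable (G : SimpleGraph A)

lemma enemiesIn_eq_zero_iff (i : A) (S : Finset A) :
    enemiesIn G i S = 0 ↔ ∀ j ∈ S, j ≠ i → G.Adj i j := by
  simp only [enemiesIn, Finset.card_eq_zero, Finset.filter_eq_empty_iff]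
  constructor
  · intro hs j hj hne
    by_contra hadj
    exact hs hj ⟨hne, hadj⟩
  · rintro hs j hj ⟨hne, hadj⟩
    exact hadj (hs j hj hne)

lemma enemiesIn_insert_friend {k i : A} (h : G.Adj k i) (D : Finset A) :
    enemiesIn G k (insert i D) = enemiesIn G k D := by
  rw [enemiesIn, enemiesIn, Finset.filter_insert, if_neg]
  push_neg
  intro _
  exact h

lemma enemiesIn_insert_self (i : A) (D : Finset A) :
    enemiesIn G i (insert i D) = enemiesIn G i D := by
  rw [enemiesIn, enemiesIn, Finset.filter_insert, if_neg]
  simp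

lemma friendsIn_insert_friend {k i : A} (h : G.Adj k i) {D : Finset A} (hiD : i ∉ D) :
    friendsIn G k (insert i D) = friendsIn G k D + 1 := by
  rw [friendsIn, friendsIn, Finset.filter_insert, if_pos h,
    Finset.card_insert_of_notMem (fun hmem => hiD (Finset.mem_of_mem_filter i hmem))]

lemma friendsIn_insert_self (i : A) (D : Finset A) :
    friendsIn G i (insert i D) = friendsIn G i D := by
  rw [friendsIn, friendsIn, Finset.filter_insert, if_neg (G.irrefl)]

lemma friendsIn_eq_card {i : A} {D : Finset A} (h : ∀ j ∈ D, G.Adj i j) :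
    friendsIn G i D = D.card := by
  rw [friendsIn, Finset.filter_true_of_mem h]

lemma friendsIn_le_pred {i : A} {S : Finset A} (hiS : i ∈ S) :
    friendsIn G i S ≤ S.card - 1 := by
  rw [friendsIn]
  calc (S.filter fun j => G.Adj i j).card ≤ (S.erase i).card := by
        apply Finset.card_le_card
        intro j hj
        rw [Finset.mem_filter] at hj
        exact Finset.mem_erase.mpr ⟨fun hji => (hji ▸ hj.2).ne rfl, hj.1⟩
    _ = S.card - 1 := Finset.card_erase_of_mem hiS

end Helpers

/-- Every core stable partition consists of at most `Δᵉ + 1` coalitions,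
where `Δᵉ` is the maximum degree of the enemy graph (the complement of the friendship
graph). -/
theorem stmt_11 [Nonempty A] (G : SimpleGraph A) [DecidableRel G.Adj]
    (P : Finpartition (Finset.univ : Finset A)) (h : CoreStable G P) :
    P.parts.card ≤ Gᶜ.maxDegree + 1 := by
  by_contra hc
  push_neg at hc
  have hcard : Gᶜ.maxDegree + 2 ≤ P.parts.card := hc
  -- total number of enemies of any agent is at most Δᵉ
  have henem : ∀ i : A, (Finset.univ.filter fun j => j ≠ i ∧ ¬ G.Adj i j).card ≤ Gᶜ.maxDegree := by
    intro i
    have heq : (Finset.univ.filter fun j => j ≠ i ∧ ¬ G.Adj i j) = Gᶜ.neighborFinset i := by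
      ext j
      simp [SimpleGraph.compl_adj, ne_comm, and_comm]
    calc (Finset.univ.filter fun j => j ≠ i ∧ ¬ G.Adj i j).card
        = Gᶜ.degree i := by rw [heq, SimpleGraph.degree]
      _ ≤ Gᶜ.maxDegree := Gᶜ.degree_le_maxDegree i
  -- number of parts containing an enemy of i is at most Δᵉ
  have hbad : ∀ i : A,
      (P.parts.filter fun C => ∃ j ∈ C, j ≠ i ∧ ¬ G.Adj i j).card ≤ Gᶜ.maxDegree := by
    intro i
    refine le_trans ?_ (henem i)
    apply Finset.card_le_card_of_injOn
      (fun C => if hC : ∃ j ∈ C, j ≠ i ∧ ¬ G.Adj i j then hC.choose else i)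
    · intro C hC
      simp only [Finset.coe_filter, Finset.mem_coe, Finset.mem_filter, Set.mem_setOf_eq] at hC
      dsimp only
      rw [dif_pos hC.2]
      obtain ⟨_, hj2⟩ := hC.2.choose_spec
      simp [hj2.1, hj2.2]
    · intro C1 hC1 C2 hC2 heq
      simp only [Finset.coe_filter, Set.mem_setOf_eq] at hC1 hC2
      simp only at heq
      rw [dif_pos hC1.2, dif_pos hC2.2] at heq
      have e1 := hC1.2.choose_spec
      have e2 := hC2.2.choose_spec
      exact P.eq_of_mem_parts hC1.1 hC2.1 e1.1 (heq ▸ e2.1)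
  -- Claim 1: nobody has an enemy in her own coalition
  have claim1 : ∀ i : A, ∀ C ∈ P.parts, i ∈ C → enemiesIn G i C = 0 := by
    intro i C hC hiC
    by_contra hne
    rw [enemiesIn_eq_zero_iff] at hne
    push_neg at hne
    have hCbad : C ∈ P.parts.filter fun C => ∃ j ∈ C, j ≠ i ∧ ¬ G.Adj i j := by
      rw [Finset.mem_filter]
      exact ⟨hC, hne⟩
    -- find a part D with no enemy of i
    have hex : (P.parts \ P.parts.filter fun C => ∃ j ∈ C, j ≠ i ∧ ¬ G.Adj i j).Nonempty := by
      rw [← Finset.card_pos]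
      have h1 := Finset.le_card_sdiff
        (P.parts.filter fun C => ∃ j ∈ C, j ≠ i ∧ ¬ G.Adj i j) P.parts
      have h2 := hbad i
      omega
    obtain ⟨D, hD⟩ := hex
    rw [Finset.mem_sdiff, Finset.mem_filter, not_and] at hD
    have hDparts : D ∈ P.parts := hD.1
    have hDnoenemy := hD.2 hDparts
    push_neg at hDnoenemy
    have hDneC : D ≠ C := by
      rintro rfl
      obtain ⟨j, hj1, hj2, hj3⟩ := hne
      exact hj3 (hDnoenemy j hj1 hj2)
    have hiD : i ∉ D := fun hiD => hDneC (P.eq_of_mem_parts hDparts hC hiD hiC)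
    have hfriend : ∀ j ∈ D, G.Adj i j := fun j hj =>
      hDnoenemy j hj (fun hji => hiD (hji ▸ hj))
    apply h (insert i D)
    refine ⟨⟨i, Finset.mem_insert_self i D⟩, ?_⟩
    intro k hk C' hC' hkC'
    rcases Finset.mem_insert.mp hk with rfl | hkD
    · -- k = i
      have : C' = C := P.eq_of_mem_parts hC' hC hkC' hiC
      subst this
      left
      have hB0 : enemiesIn G k (insert k D) = 0 := by
        rw [enemiesIn_insert_self, enemiesIn_eq_zero_iff]
        intro j hj _
        exact hfriend j hj
      rw [hB0]
      apply Nat.pos_of_ne_zero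
      intro h0
      rw [enemiesIn_eq_zero_iff] at h0
      obtain ⟨j, hj1, hj2, hj3⟩ := hne
      exact hj3 (h0 j hj1 hj2)
    · -- k ∈ D
      have hCD : C' = D := P.eq_of_mem_parts hC' hDparts hkC' hkD
      rw [hCD]
      have hadjk : G.Adj k i := (hfriend k hkD).symm
      right
      exact ⟨enemiesIn_insert_friend G hadjk D,
        by rw [friendsIn_insert_friend G hadjk hiD]; omega⟩
  -- Step 2: pick a smallest part
  have hpne : P.parts.Nonempty := Finset.card_pos.mp (by omega)
  obtain ⟨C₀, hC₀, hmin⟩ := P.parts.exists_min_image Finset.card hpne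
  obtain ⟨i, hiC₀⟩ := P.nonempty_of_mem_parts hC₀
  have hC₀notbad : C₀ ∉ P.parts.filter fun C => ∃ j ∈ C, j ≠ i ∧ ¬ G.Adj i j := by
    rw [Finset.mem_filter]
    rintro ⟨-, j, hj1, hj2, hj3⟩
    have h0 := claim1 i C₀ hC₀ hiC₀
    rw [enemiesIn_eq_zero_iff] at h0
    exact hj3 (h0 j hj1 hj2)
  have hex : (P.parts \ insert C₀ (P.parts.filter fun C => ∃ j ∈ C, j ≠ i ∧ ¬ G.Adj i j)).Nonempty := by
    rw [← Finset.card_pos]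
    have h1 := Finset.le_card_sdiff
      (insert C₀ (P.parts.filter fun C => ∃ j ∈ C, j ≠ i ∧ ¬ G.Adj i j)) P.parts
    have h2 := Finset.card_insert_le C₀ (P.parts.filter fun C => ∃ j ∈ C, j ≠ i ∧ ¬ G.Adj i j)
    have h3 := hbad i
    omega
  obtain ⟨D, hD⟩ := hex
  rw [Finset.mem_sdiff, Finset.mem_insert] at hD
  have hDparts : D ∈ P.parts := hD.1
  have hDneC₀ : D ≠ C₀ := fun he => hD.2 (Or.inl he)
  have hDnotbad : D ∉ P.parts.filter fun C => ∃ j ∈ C, j ≠ i ∧ ¬ G.Adj i j :=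
    fun he => hD.2 (Or.inr he)
  rw [Finset.mem_filter, not_and] at hDnotbad
  have hDnoenemy := hDnotbad hDparts
  push_neg at hDnoenemy
  have hiD : i ∉ D := fun hiD => hDneC₀ (P.eq_of_mem_parts hDparts hC₀ hiD hiC₀)
  have hfriend : ∀ j ∈ D, G.Adj i j := fun j hj =>
    hDnoenemy j hj (fun hji => hiD (hji ▸ hj))
  apply h (insert i D)
  refine ⟨⟨i, Finset.mem_insert_self i D⟩, ?_⟩
  intro k hk C' hC' hkC'
  rcases Finset.mem_insert.mp hk with rfl | hkD
  · -- k = i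
    have hCC : C' = C₀ := P.eq_of_mem_parts hC' hC₀ hkC' hiC₀
    rw [hCC]
    right
    constructor
    · rw [claim1 k C₀ hC₀ hiC₀, enemiesIn_insert_self, enemiesIn_eq_zero_iff]
      intro j hj _
      exact hfriend j hj
    · have hfB : friendsIn G k (insert k D) = D.card := by
        rw [friendsIn_insert_self, friendsIn_eq_card G hfriend]
      have h1 : friendsIn G k C₀ ≤ C₀.card - 1 := friendsIn_le_pred G hiC₀
      have h2 : C₀.card ≤ D.card := hmin D hDparts
      have h3 : 0 < C₀.card := Finset.card_pos.mpr ⟨k, hiC₀⟩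
      rw [hfB]
      omega
  · -- k ∈ D
    have hCD : C' = D := P.eq_of_mem_parts hC' hDparts hkC' hkD
    rw [hCD]
    have hadjk : G.Adj k i := (hfriend k hkD).symm
    right
    exact ⟨enemiesIn_insert_friend G hadjk D,
      by rw [friendsIn_insert_friend G hadjk hiD]; omega⟩
end
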